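/- arXiv:1603.07880 — 2 statements merged into one kernel-verified Lean document; each statement's English description precedes it below -/
import Mathlib

section
/- Let X be a complex Banach space and T a bounded linear operator. If there exist closed T-invariant subspaces M, N with X = M ⊕ N, T_M bounded below, and T_N quasinilpotent, then N = H₀(T); in particular the quasinilpotent part of T is closed. -/
open Filter Topology

noncomputable def clmRestrict {X : Type*} [NormedAddCommGroup X] [NormedSpace ℂ X]
    (T : X →L[ℂ] X) (M : Submodule ℂ X) (h : ∀ x ∈ M, T x ∈ M) : M →L[ℂ] M :=
  { toLinearMap := (T : X →ₗ[ℂ] X).restrict h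
    cont := by
      apply Continuous.subtype_mk
      exact T.continuous.comp continuous_subtype_val }
/-- The quasinilpotent part of an operator. -/
def H0 {X : Type*} [NormedAddCommGroup X] [NormedSpace ℂ X] (T : X →L[ℂ] X) : Set X :=
  {x : X | Tendsto (fun n : ℕ => ‖(T ^ n) x‖ ^ (1 / (n : ℝ))) atTop (nhds 0)}

/-
A vector of `N` has the same orbit under `T` as under `T_N`, and Gelfand's formula
`‖T_Nⁿ‖^{1/n} → r(T_N) = 0` puts it in `H₀(T)`. Conversely, write `x ∈ H₀(T)` as `m + n`
with `m ∈ M`, `n ∈ N`. Since `H₀(T)` is closed under subtraction, `m ∈ H₀(T)`; but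
`‖Tᵏm‖ ≥ cᵏ‖m‖` forces `liminf ‖Tᵏm‖^{1/k} ≥ c > 0` unless `m = 0`. So `x = n ∈ N`, and
`H₀(T) = N` is closed.
-/

lemma tendsto_const_rpow_one_div_natCast {c : ℝ} (hc : 0 < c) :
    Tendsto (fun n : ℕ => c ^ (1 / (n : ℝ))) atTop (𝓝 1) := by
  simpa [Function.comp_def] using
    (Real.continuousAt_const_rpow hc.ne').tendsto.comp tendsto_one_div_atTop_nhds_zero_nat

section QuasinilpotentPart

variable {E : Type*} [NormedAddCommGroup E] [NormedSpace ℂ E]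

lemma clmRestrict_pow_apply (T : E →L[ℂ] E) (M : Submodule ℂ E) (h : ∀ x ∈ M, T x ∈ M)
    (n : ℕ) (x : M) : ((clmRestrict T M h ^ n) x : E) = (T ^ n) x := by
  induction n with
  | zero => rfl
  | succ n ih =>
    rw [pow_succ', pow_succ', mul_apply_eq_comp, mul_apply_eq_comp, ← ih]
    rfl

lemma mem_H0_clmRestrict_iff (T : E →L[ℂ] E) (M : Submodule ℂ E) (h : ∀ x ∈ M, T x ∈ M)
    (x : M) : x ∈ H0 (clmRestrict T M h) ↔ (x : E) ∈ H0 T := by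
  simp only [H0, Set.mem_ofPred_eq, ← clmRestrict_pow_apply T M h, Submodule.coe_norm]

lemma sub_mem_H0 {T : E →L[ℂ] E} {x y : E} (hx : x ∈ H0 T) (hy : y ∈ H0 T) :
    x - y ∈ H0 T := by
  refine squeeze_zero (fun n => by positivity) (fun n => ?_)
    (by simpa only [add_zero] using hx.add hy)
  have hp : 0 ≤ 1 / (n : ℝ) := by positivity
  have hp1 : 1 / (n : ℝ) ≤ 1 := by simpa only [one_div] using Nat.cast_inv_le_one n
  calc ‖(T ^ n) (x - y)‖ ^ (1 / (n : ℝ))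
      ≤ (‖(T ^ n) x‖ + ‖(T ^ n) y‖) ^ (1 / (n : ℝ)) := by
        rw [map_sub]
        exact Real.rpow_le_rpow (norm_nonneg _) (norm_sub_le _ _) hp
    _ ≤ ‖(T ^ n) x‖ ^ (1 / (n : ℝ)) + ‖(T ^ n) y‖ ^ (1 / (n : ℝ)) :=
        Real.rpow_add_le_add_rpow (norm_nonneg _) (norm_nonneg _) hp hp1

lemma pow_mul_norm_le_norm_pow_apply {S : E →L[ℂ] E} {c : ℝ} (hc : 0 ≤ c)
    (hS : ∀ x, c * ‖x‖ ≤ ‖S x‖) (k : ℕ) (x : E) : c ^ k * ‖x‖ ≤ ‖(S ^ k) x‖ := by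
  induction k with
  | zero => simp
  | succ k ih =>
    calc c ^ (k + 1) * ‖x‖ = c * (c ^ k * ‖x‖) := by ring
      _ ≤ c * ‖(S ^ k) x‖ := mul_le_mul_of_nonneg_left ih hc
      _ ≤ ‖(S ^ (k + 1)) x‖ := by
        rw [pow_succ', mul_apply_eq_comp]
        exact hS _

lemma eq_zero_of_mem_H0_of_boundedBelow {S : E →L[ℂ] E} {c : ℝ} (hc : 0 < c)
    (hS : ∀ x, c * ‖x‖ ≤ ‖S x‖) {x : E} (hx : x ∈ H0 S) : x = 0 := by
  by_contra hx0
  have hlower : ∀ᶠ k : ℕ in atTop, c * ‖x‖ ^ (1 / (k : ℝ)) ≤ ‖(S ^ k) x‖ ^ (1 / (k : ℝ)) := by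
    filter_upwards [eventually_ne_atTop 0] with k hk
    calc c * ‖x‖ ^ (1 / (k : ℝ)) = (c ^ k * ‖x‖) ^ (1 / (k : ℝ)) := by
          rw [Real.mul_rpow (by positivity) (norm_nonneg _), one_div,
            Real.pow_rpow_inv_natCast hc.le hk]
      _ ≤ ‖(S ^ k) x‖ ^ (1 / (k : ℝ)) :=
          Real.rpow_le_rpow (by positivity)
            (pow_mul_norm_le_norm_pow_apply hc.le hS k x) (by positivity)
  have hc1 : Tendsto (fun k : ℕ => c * ‖x‖ ^ (1 / (k : ℝ))) atTop (𝓝 c) := by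
    simpa using (tendsto_const_rpow_one_div_natCast (norm_pos_iff.mpr hx0)).const_mul c
  exact (le_of_tendsto_of_tendsto hc1 hx hlower).not_gt hc

lemma mem_H0_of_spectralRadius_eq_zero [CompleteSpace E] {S : E →L[ℂ] E}
    (hS : spectralRadius ℂ S = 0) (x : E) : x ∈ H0 S := by
  have hgelfand : Tendsto (fun n : ℕ => ‖S ^ n‖ ^ (1 / (n : ℝ))) atTop (𝓝 0) := by
    have h := spectrum.pow_norm_pow_one_div_tendsto_nhds_spectralRadius S
    rw [hS] at h
    simpa [Function.comp_def, ENNReal.toReal_ofReal, Real.rpow_nonneg]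
      using (ENNReal.tendsto_toReal ENNReal.zero_ne_top).comp h
  -- `‖x‖ + 1` rather than `‖x‖`, whose `n`-th roots do not tend to `1` when `x = 0`
  have hbound := hgelfand.mul (tendsto_const_rpow_one_div_natCast (by positivity : 0 < ‖x‖ + 1))
  refine squeeze_zero (fun n => Real.rpow_nonneg (norm_nonneg _) _) (fun n => ?_)
    (by simpa only [zero_mul] using hbound)
  rw [← Real.mul_rpow (norm_nonneg _) (by positivity)]
  refine Real.rpow_le_rpow (norm_nonneg _) ?_ (by positivity)
  exact (S ^ n).le_opNorm_of_le (le_add_of_nonneg_right zero_le_one)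

end QuasinilpotentPart

theorem stmt_11_general {X : Type*} [NormedAddCommGroup X] [NormedSpace ℂ X] [CompleteSpace X]
    (T : X →L[ℂ] X) (M N : Submodule ℂ X)
    (hNc : IsClosed (N : Set X))
    (hM : ∀ x ∈ M, T x ∈ M) (hN : ∀ x ∈ N, T x ∈ N)
    (hcompl : IsCompl M N)
    (hbb : ∃ c > (0 : ℝ), ∀ x : M, c * ‖x‖ ≤ ‖clmRestrict T M hM x‖)
    (hq : spectralRadius ℂ (clmRestrict T N hN) = 0) :
    (N : Set X) = H0 T ∧ IsClosed (H0 T) := by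
  have : CompleteSpace N := hNc.completeSpace_coe
  obtain ⟨c, hc, hcM⟩ := hbb
  have hNH0 : (N : Set X) ⊆ H0 T := fun x hx =>
    (mem_H0_clmRestrict_iff T N hN ⟨x, hx⟩).mp (mem_H0_of_spectralRadius_eq_zero hq _)
  have hH0N : H0 T ⊆ N := by
    intro x hx
    have hxMN : x ∈ M ⊔ N := hcompl.sup_eq_top ▸ Submodule.mem_top
    obtain ⟨m, hm, n, hn, rfl⟩ := Submodule.mem_sup.mp hxMN
    have hmH0 : m ∈ H0 T := by simpa only [add_sub_cancel_right] using sub_mem_H0 hx (hNH0 hn)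
    have hm0 : m = 0 := congrArg Subtype.val <| eq_zero_of_mem_H0_of_boundedBelow hc hcM
      ((mem_H0_clmRestrict_iff T M hM ⟨m, hm⟩).mpr hmH0)
    simpa [hm0] using hn
  have hN_eq : (N : Set X) = H0 T := hNH0.antisymm hH0N
  exact ⟨hN_eq, hN_eq ▸ hNc⟩

/-- If T = T_M ⊕ T_N with T_M bounded below and T_N quasinilpotent, then
N = H₀(T); in particular H₀(T) is closed. -/
theorem stmt_11 {X : Type*} [NormedAddCommGroup X] [NormedSpace ℂ X] [CompleteSpace X]
    (T : X →L[ℂ] X) (M N : Submodule ℂ X)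
    (hMc : IsClosed (M : Set X)) (hNc : IsClosed (N : Set X))
    (hM : ∀ x ∈ M, T x ∈ M) (hN : ∀ x ∈ N, T x ∈ N)
    (hcompl : IsCompl M N)
    (hbb : ∃ c > (0 : ℝ), ∀ x : M, c * ‖x‖ ≤ ‖clmRestrict T M hM x‖)
    (hq : spectralRadius ℂ (clmRestrict T N hN) = 0) :
    (N : Set X) = H0 T ∧ IsClosed (H0 T) :=
  stmt_11_general T M N hNc hM hN hcompl hbb hq
end

section
/- Let X be a complex Banach space and T a bounded linear operator on X. T is quasinilpotent if and only if H₀(T) = X. -/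
/-!
A nonnegative sequence satisfies `u n ^ (1 / n) → 0` exactly when `u n ≤ C * e ^ n` for every
`e > 0`. By Gelfand's formula, `r(T) = 0` is this bound for `‖T ^ n‖`, which passes to every
`‖T ^ n x‖`. Conversely, the pointwise bounds `‖T ^ n x‖ ≤ C_x * e ^ n` say that the operators
`(e⁻¹ • T) ^ n` are pointwise bounded, so uniform boundedness makes the bound uniform in `x`.
-/

open Filter Topology

theorem Real.tendsto_rpow_one_div_natCast_nhds_one {C : ℝ} (hC : 0 < C) :
    Tendsto (fun n : ℕ => C ^ (1 / (n : ℝ))) atTop (𝓝 1) := by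
  simpa [Function.comp_def] using
    (Real.continuousAt_const_rpow hC.ne').tendsto.comp tendsto_one_div_atTop_nhds_zero_nat

theorem Real.rpow_one_div_natCast_le_iff {x y : ℝ} {n : ℕ} (hx : 0 ≤ x) (hy : 0 ≤ y)
    (hn : n ≠ 0) : x ^ (1 / (n : ℝ)) ≤ y ↔ x ≤ y ^ n := by
  rw [one_div, Real.rpow_inv_le_iff_of_pos hx hy (by positivity), Real.rpow_natCast]

theorem tendsto_rpow_one_div_nhds_zero_iff {u : ℕ → ℝ} (hu : ∀ n, 0 ≤ u n) :
    Tendsto (fun n : ℕ => u n ^ (1 / (n : ℝ))) atTop (𝓝 0) ↔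
      ∀ e > 0, ∃ C, ∀ n, u n ≤ C * e ^ n := by
  constructor
  · intro h e he
    have hev : ∀ᶠ n in atTop, u n / e ^ n ≤ 1 := by
      filter_upwards [h.eventually_le_const he, eventually_ne_atTop 0] with n hn hn0
      rw [div_le_one (by positivity)]
      exact (Real.rpow_one_div_natCast_le_iff (hu n) he.le hn0).1 hn
    obtain ⟨C, hC⟩ := (isBoundedUnder_of_eventually_le hev).bddAbove_range
    exact ⟨C, fun n => (div_le_iff₀ (by positivity)).1 (hC (Set.mem_range_self n))⟩
  · intro h
    refine tendsto_order.2
      ⟨fun a ha => .of_forall fun n => ha.trans_le (Real.rpow_nonneg (hu n) _), fun ε hε => ?_⟩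
    obtain ⟨C, hC⟩ := h (ε / 2) (by positivity)
    set C' := max C 1
    have hC' : 0 < C' := lt_max_of_lt_right one_pos
    filter_upwards [(Real.tendsto_rpow_one_div_natCast_nhds_one hC').eventually_lt_const
      one_lt_two, eventually_ne_atTop 0] with n hn hn0
    calc u n ^ (1 / (n : ℝ)) ≤ C' ^ (1 / (n : ℝ)) * (ε / 2) := by
          rw [Real.rpow_one_div_natCast_le_iff (hu n) (by positivity) hn0, mul_pow, one_div,
            Real.rpow_inv_natCast_pow hC'.le hn0]
          exact (hC n).trans (by gcongr; exact le_max_left _ _)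
      _ < 2 * (ε / 2) := by gcongr
      _ = ε := by ring

theorem spectralRadius_eq_zero_iff_tendsto {A : Type*} [NormedRing A] [NormedAlgebra ℂ A]
    [CompleteSpace A] (a : A) :
    spectralRadius ℂ a = 0 ↔ Tendsto (fun n : ℕ => ‖a ^ n‖ ^ (1 / (n : ℝ))) atTop (𝓝 0) := by
  have gelfand := spectrum.pow_norm_pow_one_div_tendsto_nhds_spectralRadius a
  constructor
  · intro h0
    rw [h0] at gelfand
    simpa [Function.comp_def, ENNReal.toReal_ofReal, Real.rpow_nonneg] using
      (ENNReal.tendsto_toReal ENNReal.zero_ne_top).comp gelfand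
  · intro h0
    exact tendsto_nhds_unique gelfand (by simpa using ENNReal.tendsto_ofReal h0)

theorem banach_steinhaus_weighted {𝕜 E F ι : Type*} [RCLike 𝕜] [NormedAddCommGroup E]
    [NormedSpace 𝕜 E] [CompleteSpace E] [NormedAddCommGroup F] [NormedSpace 𝕜 F]
    {g : ι → E →L[𝕜] F} {w : ι → ℝ} (hw : ∀ i, 0 < w i)
    (h : ∀ x, ∃ C, ∀ i, ‖g i x‖ ≤ C * w i) : ∃ C, ∀ i, ‖g i‖ ≤ C * w i := by
  obtain ⟨C, hC⟩ := banach_steinhaus (g := fun i => ((w i)⁻¹ : 𝕜) • g i) fun x => by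
    obtain ⟨C, hC⟩ := h x
    refine ⟨C, fun i => ?_⟩
    rw [smul_apply, norm_smul, norm_inv, RCLike.norm_ofReal,
      abs_of_pos (hw i), inv_mul_le_iff₀ (hw i), mul_comm]
    exact hC i
  refine ⟨C, fun i => ?_⟩
  have hCi := hC i
  rwa [norm_smul, norm_inv, RCLike.norm_ofReal, abs_of_pos (hw i), inv_mul_le_iff₀ (hw i),
    mul_comm] at hCi

/-- T is quasinilpotent iff its quasinilpotent part is the whole space. -/
theorem stmt_16 {X : Type*} [NormedAddCommGroup X] [NormedSpace ℂ X] [CompleteSpace X]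
    (T : X →L[ℂ] X) :
    spectralRadius ℂ T = 0 ↔ H0 T = Set.univ := by
  rw [spectralRadius_eq_zero_iff_tendsto, Set.eq_univ_iff_forall,
    tendsto_rpow_one_div_nhds_zero_iff fun _ => norm_nonneg _]
  simp only [H0, Set.mem_ofPred_eq]
  constructor
  · intro hT x
    rw [tendsto_rpow_one_div_nhds_zero_iff fun _ => norm_nonneg _]
    intro e he
    obtain ⟨C, hC⟩ := hT e he
    refine ⟨C * ‖x‖, fun n => ?_⟩
    calc ‖(T ^ n) x‖ ≤ ‖T ^ n‖ * ‖x‖ := (T ^ n).le_opNorm x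
      _ ≤ C * e ^ n * ‖x‖ := by gcongr; exact hC n
      _ = C * ‖x‖ * e ^ n := by ring
  · intro hx e he
    refine banach_steinhaus_weighted (fun n => pow_pos he n) fun x => ?_
    exact (tendsto_rpow_one_div_nhds_zero_iff fun _ => norm_nonneg _).1 (hx x) e he
end
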